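/- For the background subsonic super-Alfvénic solution on [r_s, r₂], the coefficient d₄(y₁) := d₁(y₁)·(d₃/d)'(y₁) + (1/y₁ + d₂(y₁))·(d₃/d)(y₁) admits the representation d₄(y₁) = (1/(y₁d))·(2B̄/(γS̄₊Ū₊) + κ̄²ρ̄₊Ū₊M̄₊²/((γ−1)S̄₊)) + d₂d₃/d + (d₁d₃/d²)·(ρ̄₊κ̄²d₂ + (1/y₁)ρ̄₊κ̄²M̄₊²), and consequently d₄(y₁) > 0 for every y₁ ∈ [r_s, r₂]. -/

import Mathlib

noncomputable section

/-- The squared Mach number of the background flow. -/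
def Mach2 (γ Sp : ℝ) (Up ρp : ℝ → ℝ) (t : ℝ) : ℝ :=
  Up t ^ 2 / (γ * Sp * ρp t ^ (γ - 1))

/-- The Bernoulli quantity of the background flow. -/
def BernB (γ Sp : ℝ) (Up ρp : ℝ → ℝ) (t : ℝ) : ℝ :=
  Up t ^ 2 / 2 + γ * Sp * ρp t ^ (γ - 1) / (γ - 1)

/-- `d₁ = 1 - M̄₊²`. -/
def dOne (γ Sp : ℝ) (Up ρp : ℝ → ℝ) (t : ℝ) : ℝ := 1 - Mach2 γ Sp Up ρp t

/-- `d₂ = M̄₊²(2 + (γ-1)M̄₊²)/(y₁(1 - M̄₊²))`. -/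
def dTwo (γ Sp : ℝ) (Up ρp : ℝ → ℝ) (t : ℝ) : ℝ :=
  Mach2 γ Sp Up ρp t * (2 + (γ - 1) * Mach2 γ Sp Up ρp t)
    / (t * (1 - Mach2 γ Sp Up ρp t))

/-- `d₀ = 1 - κ̄²ρ̄₊`. -/
def dZero (κ : ℝ) (ρp : ℝ → ℝ) (t : ℝ) : ℝ := 1 - κ ^ 2 * ρp t

/-- `d = 1 - κ̄²ρ̄₊ + κ̄²ρ̄₊M̄₊²`. -/
def dCoef (γ Sp κ : ℝ) (Up ρp : ℝ → ℝ) (t : ℝ) : ℝ :=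
  1 - κ ^ 2 * ρp t + κ ^ 2 * ρp t * Mach2 γ Sp Up ρp t

/-- `d₃ = (B̄ - Ū₊²/2)/(γS̄₊Ū₊) + κ̄²ρ̄₊Ū₊/((γ-1)S̄₊)`. -/
def dThree (γ Sp κ : ℝ) (Up ρp : ℝ → ℝ) (t : ℝ) : ℝ :=
  (BernB γ Sp Up ρp t - Up t ^ 2 / 2) / (γ * Sp * Up t)
    + κ ^ 2 * (ρp t * Up t) / ((γ - 1) * Sp)

/-- The background ODE system `(ρ̄Ū)' + ρ̄Ū/r = 0`, `ρ̄ŪŪ' + P̄' = 0`, `P̄ = S̄ρ̄^γ`,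
with positivity, stated on `[a,b]` with derivatives taken within `[a,b]`. -/
def BackgroundODE (γ Sp a b : ℝ) (Up ρp : ℝ → ℝ) : Prop :=
  ContDiffOn ℝ 1 Up (Set.Icc a b) ∧ ContDiffOn ℝ 1 ρp (Set.Icc a b) ∧
  (∀ r ∈ Set.Icc a b, 0 < ρp r ∧ 0 < Up r) ∧
  (∀ r ∈ Set.Icc a b,
    derivWithin (fun t => ρp t * Up t) (Set.Icc a b) r + ρp r * Up r / r = 0) ∧
  (∀ r ∈ Set.Icc a b,
    ρp r * Up r * derivWithin Up (Set.Icc a b) r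
      + derivWithin (fun t => Sp * ρp t ^ γ) (Set.Icc a b) r = 0)

set_option maxHeartbeats 0 in
/-- The coefficient `d₄ = d₁(d₃/d)' + (1/y₁ + d₂)(d₃/d)` of the nonlocal term admits
the stated representation along the background subsonic super-Alfvénic solution,
and is therefore strictly positive on `[r_s, r₂]`. -/
theorem d4_representation_and_positivity
    (γ rs r2 Sp κ : ℝ) (Up ρp : ℝ → ℝ)
    (hγ : 1 < γ) (hrs : 0 < rs) (hr : rs < r2) (hS : 0 < Sp)
    (hODE : BackgroundODE γ Sp rs r2 Up ρp)
    (hsub : ∀ r ∈ Set.Icc rs r2, Mach2 γ Sp Up ρp r < 1)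
    (hAlf : ∀ r ∈ Set.Icc rs r2, κ ^ 2 * ρp r < 1) :
    ∀ y ∈ Set.Icc rs r2,
      (dOne γ Sp Up ρp y
          * derivWithin (fun t => dThree γ Sp κ Up ρp t / dCoef γ Sp κ Up ρp t)
              (Set.Icc rs r2) y
        + (1 / y + dTwo γ Sp Up ρp y)
            * (dThree γ Sp κ Up ρp y / dCoef γ Sp κ Up ρp y)
        = 1 / (y * dCoef γ Sp κ Up ρp y)
            * (2 * BernB γ Sp Up ρp y / (γ * Sp * Up y)
              + κ ^ 2 * ρp y * Up y * Mach2 γ Sp Up ρp y / ((γ - 1) * Sp))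
          + dTwo γ Sp Up ρp y * dThree γ Sp κ Up ρp y / dCoef γ Sp κ Up ρp y
          + dOne γ Sp Up ρp y * dThree γ Sp κ Up ρp y / dCoef γ Sp κ Up ρp y ^ 2
              * (ρp y * κ ^ 2 * dTwo γ Sp Up ρp y
                + 1 / y * (ρp y * κ ^ 2 * Mach2 γ Sp Up ρp y))) ∧
      0 < dOne γ Sp Up ρp y
          * derivWithin (fun t => dThree γ Sp κ Up ρp t / dCoef γ Sp κ Up ρp t)
              (Set.Icc rs r2) y
        + (1 / y + dTwo γ Sp Up ρp y)
            * (dThree γ Sp κ Up ρp y / dCoef γ Sp κ Up ρp y) := by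
  obtain ⟨hUc, hρc, hposall, hmass, hmom⟩ := hODE
  intro y hy
  have huniq : UniqueDiffWithinAt ℝ (Set.Icc rs r2) y := (uniqueDiffOn_Icc hr) y hy
  obtain ⟨hρ0, hU0⟩ := hposall y hy
  have hy0 : 0 < y := lt_of_lt_of_le hrs hy.1
  have hγ1 : (0:ℝ) < γ - 1 := by linarith
  have hγ0 : (0:ℝ) < γ := by linarith
  have hA0 : 0 < ρp y ^ (γ - 1) := Real.rpow_pos_of_pos hρ0 _
  have hc0 : 0 < γ * Sp * ρp y ^ (γ - 1) := by positivity
  have hMlt : Up y ^ 2 / (γ * Sp * ρp y ^ (γ - 1)) < 1 := hsub y hy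
  have hM0 : 0 < Up y ^ 2 / (γ * Sp * ρp y ^ (γ - 1)) := by positivity
  have hAl : κ ^ 2 * ρp y < 1 := hAlf y hy
  have hDpos : 0 < γ * Sp * ρp y ^ (γ - 1) - Up y ^ 2 := by
    have := (div_lt_one hc0).mp hMlt; linarith
  have hdpos : 0 < 1 - κ ^ 2 * ρp y
      + κ ^ 2 * ρp y * (Up y ^ 2 / (γ * Sp * ρp y ^ (γ - 1))) := by
    have h1 : 0 ≤ κ ^ 2 * ρp y * (Up y ^ 2 / (γ * Sp * ρp y ^ (γ - 1))) := by positivity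
    linarith
  have h1M : 0 < 1 - Up y ^ 2 / (γ * Sp * ρp y ^ (γ - 1)) := by linarith
  set U' := derivWithin Up (Set.Icc rs r2) y with hU'def
  set R' := derivWithin ρp (Set.Icc rs r2) y with hR'def
  have hUd : HasDerivWithinAt Up U' (Set.Icc rs r2) y :=
    (hUc.differentiableOn one_ne_zero y hy).hasDerivWithinAt
  have hρd : HasDerivWithinAt ρp R' (Set.Icc rs r2) y :=
    (hρc.differentiableOn one_ne_zero y hy).hasDerivWithinAt
  have hm1 : R' * Up y + ρp y * U' + ρp y * Up y / y = 0 := by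
    have h := hmass y hy
    rwa [HasDerivWithinAt.derivWithin (f := fun t => ρp t * Up t) (hρd.mul hUd) huniq] at h
  have hm1' : R' * Up y * y + ρp y * U' * y + ρp y * Up y = 0 := by
    have h3 : (R' * Up y + ρp y * U' + ρp y * Up y / y) * y = 0 := by rw [hm1, zero_mul]
    rw [add_mul, add_mul, div_mul_cancel₀ _ hy0.ne'] at h3
    linarith
  have hm2 : ρp y * Up y * U' + Sp * (R' * γ * ρp y ^ (γ - 1)) = 0 := by
    have h := hmom y hy
    rwa [((hρd.rpow_const (Or.inl hρ0.ne')).const_mul Sp).derivWithin huniq] at h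
  have hkey : R' * (y * (γ * Sp * ρp y ^ (γ - 1) - Up y ^ 2)) = ρp y * Up y ^ 2 := by
    linear_combination (-(Up y)) * hm1' + y * hm2
  have hρe : R' = ρp y * Up y ^ 2 / (y * (γ * Sp * ρp y ^ (γ - 1) - Up y ^ 2)) := by
    rw [eq_div_iff (mul_pos hy0 hDpos).ne']
    linear_combination hkey
  have hUe : U' = -(γ * Sp * ρp y ^ (γ - 1) * Up y)
      / (y * (γ * Sp * ρp y ^ (γ - 1) - Up y ^ 2)) := by
    rw [eq_div_iff (mul_pos hy0 hDpos).ne']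
    have h : ρp y * Up y * (U' * (y * (γ * Sp * ρp y ^ (γ - 1) - Up y ^ 2)))
        = ρp y * Up y * (-(γ * Sp * ρp y ^ (γ - 1) * Up y)) := by
      linear_combination (y * (γ * Sp * ρp y ^ (γ - 1) - Up y ^ 2)) * hm2
        - (γ * Sp * ρp y ^ (γ - 1)) * hkey
    exact mul_left_cancel₀ (by positivity) h
  have hA2 : ρp y ^ (γ - 1 - 1) = ρp y ^ (γ - 1) / ρp y := by
    rw [Real.rpow_sub hρ0, Real.rpow_one]
  -- derivative of the quotient d₃/d
  have hAd : HasDerivWithinAt (fun t => ρp t ^ (γ - 1))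
      (R' * (γ - 1) * ρp y ^ (γ - 1 - 1)) (Set.Icc rs r2) y :=
    hρd.rpow_const (Or.inl hρ0.ne')
  have hU2d := hUd.pow 2
  have hden1 : HasDerivWithinAt (fun t => γ * Sp * Up t) (γ * Sp * U') (Set.Icc rs r2) y :=
    hUd.const_mul (γ * Sp)
  have hNum := ((hU2d.div_const 2).add ((hAd.const_mul (γ * Sp)).div_const (γ - 1))).sub
    (hU2d.div_const 2)
  have hT2 : HasDerivWithinAt
      (fun t => (Up t ^ 2 / 2 + γ * Sp * ρp t ^ (γ - 1) / (γ - 1) - Up t ^ 2 / 2)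
          / (γ * Sp * Up t) + κ ^ 2 * (ρp t * Up t) / ((γ - 1) * Sp))
      (ρp y ^ (γ - 1) * ((γ - 1) * Up y ^ 2 + γ * Sp * ρp y ^ (γ - 1))
          / ((γ - 1) * Up y * (y * (γ * Sp * ρp y ^ (γ - 1) - Up y ^ 2)))
        - κ ^ 2 * ρp y * Up y / ((γ - 1) * Sp * y)) (Set.Icc rs r2) y := by
    refine ((hNum.div hden1 (by positivity)).add
      (((hρd.mul hUd).const_mul (κ ^ 2)).div_const ((γ - 1) * Sp))).congr_deriv ?_
    rw [hρe, hUe, hA2]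
    simp only [Pi.pow_apply, Pi.add_apply, Pi.sub_apply, Pi.div_apply]
    field_simp
    ring
  have hMach := hU2d.div (hAd.const_mul (γ * Sp)) hc0.ne'
  have hD2 : HasDerivWithinAt
      (fun t => 1 - κ ^ 2 * ρp t
        + κ ^ 2 * ρp t * (Up t ^ 2 / (γ * Sp * ρp t ^ (γ - 1))))
      (-(κ ^ 2 * ρp y * Up y ^ 2) / (y * (γ * Sp * ρp y ^ (γ - 1)))
        - κ ^ 2 * ρp y * Up y ^ 2
            * (2 + (γ - 1) * Up y ^ 2 / (γ * Sp * ρp y ^ (γ - 1)))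
          / (y * (γ * Sp * ρp y ^ (γ - 1) - Up y ^ 2))) (Set.Icc rs r2) y := by
    refine (((hρd.const_mul (κ ^ 2)).const_sub 1).add
      ((hρd.const_mul (κ ^ 2)).mul hMach)).congr_deriv ?_
    rw [hρe, hUe, hA2]
    simp only [Pi.pow_apply, Pi.add_apply, Pi.sub_apply, Pi.div_apply]
    field_simp
    ring
  have hg := hT2.div hD2 hdpos.ne'
  have hder := hg.derivWithin huniq
  -- positivity facts about the named coefficients
  have hM2pos : 0 < Mach2 γ Sp Up ρp y := hM0
  have hd1 : 0 < dOne γ Sp Up ρp y := by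
    have := hsub y hy
    simp only [dOne]; linarith
  have hd2 : 0 < dTwo γ Sp Up ρp y := by
    have hM1 := hsub y hy
    simp only [dTwo]
    exact div_pos (mul_pos hM2pos (by nlinarith)) (mul_pos hy0 (by linarith))
  have hd3 : 0 < dThree γ Sp κ Up ρp y := by
    simp only [dThree, BernB]
    have he : Up y ^ 2 / 2 + γ * Sp * ρp y ^ (γ - 1) / (γ - 1) - Up y ^ 2 / 2
        = γ * Sp * ρp y ^ (γ - 1) / (γ - 1) := by ring
    rw [he]
    have h1 : 0 < γ * Sp * ρp y ^ (γ - 1) / (γ - 1) / (γ * Sp * Up y) :=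
      div_pos (div_pos hc0 hγ1) (by positivity)
    have h2 : 0 ≤ κ ^ 2 * (ρp y * Up y) / ((γ - 1) * Sp) := by positivity
    linarith
  have hdc : 0 < dCoef γ Sp κ Up ρp y := by
    simp only [dCoef, Mach2]; exact hdpos
  have hB : 0 < BernB γ Sp Up ρp y := by
    simp only [BernB]
    have h2 : 0 < γ * Sp * ρp y ^ (γ - 1) / (γ - 1) := div_pos hc0 hγ1
    have h3 : 0 ≤ Up y ^ 2 / 2 := by positivity
    linarith
  -- the representation
  have EQ : dOne γ Sp Up ρp y
          * derivWithin (fun t => dThree γ Sp κ Up ρp t / dCoef γ Sp κ Up ρp t)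
              (Set.Icc rs r2) y
        + (1 / y + dTwo γ Sp Up ρp y)
            * (dThree γ Sp κ Up ρp y / dCoef γ Sp κ Up ρp y)
        = 1 / (y * dCoef γ Sp κ Up ρp y)
            * (2 * BernB γ Sp Up ρp y / (γ * Sp * Up y)
              + κ ^ 2 * ρp y * Up y * Mach2 γ Sp Up ρp y / ((γ - 1) * Sp))
          + dTwo γ Sp Up ρp y * dThree γ Sp κ Up ρp y / dCoef γ Sp κ Up ρp y
          + dOne γ Sp Up ρp y * dThree γ Sp κ Up ρp y / dCoef γ Sp κ Up ρp y ^ 2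
              * (ρp y * κ ^ 2 * dTwo γ Sp Up ρp y
                + 1 / y * (ρp y * κ ^ 2 * Mach2 γ Sp Up ρp y)) := by
    simp only [dOne, dTwo, dThree, dCoef, BernB, Mach2]
    erw [hder]
    set A := ρp y ^ (γ - 1) with hA
    set U := Up y with hU
    set R := ρp y with hR
    have n1 : U ≠ 0 := hU0.ne'
    have n4 : y ≠ 0 := hy0.ne'
    have n5 : Sp ≠ 0 := hS.ne'
    have n6 : γ ≠ 0 := hγ0.ne'
    have n7 : γ - 1 ≠ 0 := hγ1.ne'
    have n8 : γ * Sp * A - U ^ 2 ≠ 0 := hDpos.ne'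
    have n3 : γ * Sp * A ≠ 0 := hc0.ne'
    have n10 : 1 - U ^ 2 / (γ * Sp * A) ≠ 0 := h1M.ne'
    set q := U ^ 2 / (γ * Sp * A) with hq
    set T := (U ^ 2 / 2 + γ * Sp * A / (γ - 1) - U ^ 2 / 2) / (γ * Sp * U)
      + κ ^ 2 * (R * U) / ((γ - 1) * Sp) with hT3
    set T' := A * ((γ - 1) * U ^ 2 + γ * Sp * A)
        / ((γ - 1) * U * (y * (γ * Sp * A - U ^ 2)))
      - κ ^ 2 * R * U / ((γ - 1) * Sp * y) with hT4
    set D' := -(κ ^ 2 * R * U ^ 2) / (y * (γ * Sp * A))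
      - κ ^ 2 * R * U ^ 2 * (2 + (γ - 1) * U ^ 2 / (γ * Sp * A))
        / (y * (γ * Sp * A - U ^ 2)) with hD4
    set dc := 1 - κ ^ 2 * R + κ ^ 2 * R * q with hdc4
    set d2e := q * (2 + (γ - 1) * q) / (y * (1 - q)) with hd24
    set K := 2 * (U ^ 2 / 2 + γ * Sp * A / (γ - 1)) / (γ * Sp * U)
      + κ ^ 2 * R * U * q / ((γ - 1) * Sp) with hK
    have ndc : dc ≠ 0 := by rw [hdc4, hq]; exact hdpos.ne'
    have Li : (1 - q) * T' + 1 / y * T = 1 / y * K := by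
      rw [hT3, hT4, hK, hq]
      field_simp
      ring
    have Liii : -D' = R * κ ^ 2 * d2e + 1 / y * (R * κ ^ 2 * q) := by
      rw [hD4, hd24, hq]
      field_simp
      ring
    show (1 - q) * ((T' * dc - T * D') / dc ^ 2) + (1 / y + d2e) * (T / dc)
      = 1 / (y * dc) * K + d2e * T / dc
        + (1 - q) * T / dc ^ 2 * (R * κ ^ 2 * d2e + 1 / y * (R * κ ^ 2 * q))
    rw [← Liii]
    field_simp
    field_simp at Li
    linear_combination dc * Li
  refine ⟨EQ, ?_⟩
  rw [EQ]
  have t1 : 0 < 1 / (y * dCoef γ Sp κ Up ρp y)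
      * (2 * BernB γ Sp Up ρp y / (γ * Sp * Up y)
        + κ ^ 2 * ρp y * Up y * Mach2 γ Sp Up ρp y / ((γ - 1) * Sp)) := by
    apply mul_pos (one_div_pos.mpr (mul_pos hy0 hdc))
    have ha : 0 < 2 * BernB γ Sp Up ρp y / (γ * Sp * Up y) :=
      div_pos (by linarith) (by positivity)
    have hb : 0 ≤ κ ^ 2 * ρp y * Up y * Mach2 γ Sp Up ρp y / ((γ - 1) * Sp) :=
      div_nonneg (mul_nonneg (mul_nonneg (mul_nonneg (sq_nonneg κ) hρ0.le) hU0.le)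
        hM2pos.le) (mul_pos hγ1 hS).le
    linarith
  have t2 : 0 < dTwo γ Sp Up ρp y * dThree γ Sp κ Up ρp y / dCoef γ Sp κ Up ρp y :=
    div_pos (mul_pos hd2 hd3) hdc
  have t3 : 0 ≤ dOne γ Sp Up ρp y * dThree γ Sp κ Up ρp y / dCoef γ Sp κ Up ρp y ^ 2
      * (ρp y * κ ^ 2 * dTwo γ Sp Up ρp y
        + 1 / y * (ρp y * κ ^ 2 * Mach2 γ Sp Up ρp y)) := by
    apply mul_nonneg (div_nonneg (mul_pos hd1 hd3).le (by positivity))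
    have h1 : 0 ≤ ρp y * κ ^ 2 * dTwo γ Sp Up ρp y :=
      mul_nonneg (mul_nonneg hρ0.le (sq_nonneg κ)) hd2.le
    have h2 : 0 ≤ 1 / y * (ρp y * κ ^ 2 * Mach2 γ Sp Up ρp y) :=
      mul_nonneg (by positivity) (mul_nonneg (mul_nonneg hρ0.le (sq_nonneg κ)) hM2pos.le)
    linarith
  linarith
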